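/- Let (Ω, P) be a probability space, n ∈ ℕ, and let u₁,…,uₙ and v₁,…,vₙ be nonnegative integrable functions such that E[(∑_{m=1}^{k−1} u_m² + vₖ²)^{1/2}] ≤ E[(∑_{m=1}^k u_m²)^{1/2}] for all 1 ≤ k ≤ n. Then E[(∑_{m=1}^n v_m²)^{1/2}] ≤ 2 E[(∑_{m=1}^n u_m²)^{1/2}]. -/

import Mathlib

/-! With `A = ∑_{m ≤ n} u_m²` and `a_k = ∑_{m < k} u_m²`: by concavity of `√`, the increment
`√(a + c) - √a` decreases in `a`, which also makes `x ↦ √(A + x) - √A` subadditive on `[0, ∞)`.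
So pointwise
`√(∑ v_k²) ≤ √A + ∑_k (√(A + v_k²) - √A) ≤ √A + ∑_k (√(a_k + v_k²) - √a_k)`.
Integrating, the hypothesis bounds the expectation of the `k`-th increment by
`E √a_{k+1} - E √a_k`, and these telescope to `E √A`. -/

open MeasureTheory Finset

theorem Real.sqrt_add_sub_sqrt_le_of_le {a b c : ℝ} (ha : 0 ≤ a) (hab : a ≤ b) (hc : 0 ≤ c) :
    √(b + c) - √b ≤ √(a + c) - √a := by
  have hb : 0 ≤ b := ha.trans hab
  have hcross : √(b + c) * √a ≤ √(a + c) * √b := by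
    rw [← Real.sqrt_mul (by positivity), ← Real.sqrt_mul (by positivity)]
    exact Real.sqrt_le_sqrt (by nlinarith)
  have hsq : (√(b + c) + √a) ^ 2 ≤ (√(a + c) + √b) ^ 2 := by
    nlinarith [Real.sq_sqrt (add_nonneg hb hc), Real.sq_sqrt (add_nonneg ha hc),
      Real.sq_sqrt ha, Real.sq_sqrt hb]
  have := (pow_le_pow_iff_left₀ (by positivity) (by positivity) two_ne_zero).mp hsq
  linarith

theorem Real.sqrt_add_sum_sub_sqrt_le {ι : Type*} (s : Finset ι) {A : ℝ} (hA : 0 ≤ A)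
    {b : ι → ℝ} (hb : ∀ i ∈ s, 0 ≤ b i) :
    √(A + ∑ i ∈ s, b i) - √A ≤ ∑ i ∈ s, (√(A + b i) - √A) := by
  refine le_sum_of_subadditive_on_pred (fun x => √(A + x) - √A) (0 ≤ ·) (by simp)
    (fun x y hx hy => ?_) (fun _ _ => add_nonneg) b hb
  have := Real.sqrt_add_sub_sqrt_le_of_le hA (le_add_of_nonneg_right hx) hy
  simp only [← add_assoc]
  linarith

theorem Real.sqrt_add_sq_le (x y : ℝ) : √(x + y ^ 2) ≤ √x + |y| := by
  rw [Real.sqrt_le_iff]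
  refine ⟨by positivity, ?_⟩
  nlinarith [Real.sq_sqrt' (x := x), le_max_left x 0, sq_abs y, Real.sqrt_nonneg x, abs_nonneg y]

theorem Real.sqrt_sum_sq_le_add_sum_increments (n : ℕ) (x y : ℕ → ℝ) :
    √(∑ m ∈ Icc 1 n, y m ^ 2) ≤ √(∑ m ∈ Icc 1 n, x m ^ 2) +
      ∑ k ∈ Icc 1 n, (√(∑ m ∈ Icc 1 (k - 1), x m ^ 2 + y k ^ 2) -
        √(∑ m ∈ Icc 1 (k - 1), x m ^ 2)) := by
  set A := ∑ m ∈ Icc 1 n, x m ^ 2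
  have hA : 0 ≤ A := by positivity
  have hsub := Real.sqrt_add_sum_sub_sqrt_le (Icc 1 n) hA (b := fun k => y k ^ 2)
    fun _ _ => sq_nonneg _
  have hincr : ∀ k ∈ Icc 1 n, √(A + y k ^ 2) - √A ≤
      √(∑ m ∈ Icc 1 (k - 1), x m ^ 2 + y k ^ 2) - √(∑ m ∈ Icc 1 (k - 1), x m ^ 2) := by
    intro k hk
    refine Real.sqrt_add_sub_sqrt_le_of_le (by positivity) ?_ (sq_nonneg _)
    exact sum_le_sum_of_subset_of_nonneg (Icc_subset_Icc_right (by simp at hk; omega))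
      fun _ _ _ => sq_nonneg _
  calc √(∑ m ∈ Icc 1 n, y m ^ 2) ≤ √(A + ∑ m ∈ Icc 1 n, y m ^ 2) :=
        Real.sqrt_le_sqrt (le_add_of_nonneg_left hA)
    _ ≤ √A + ∑ k ∈ Icc 1 n, (√(A + y k ^ 2) - √A) := by linarith
    _ ≤ _ := add_le_add le_rfl (sum_le_sum hincr)

theorem Finset.sum_Icc_one_sub_pred {M : Type*} [AddCommGroup M] (f : ℕ → M) (n : ℕ) :
    ∑ k ∈ Icc 1 n, (f k - f (k - 1)) = f n - f 0 := by
  induction n with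
  | zero => simp
  | succ n ih =>
    rw [sum_Icc_succ_top (by omega), ih, Nat.add_sub_cancel]
    abel

section Integrability

variable {Ω : Type*} [MeasurableSpace Ω] {μ : Measure Ω}

theorem MeasureTheory.Integrable.sqrt_add_sq {F g : Ω → ℝ} (hF : AEStronglyMeasurable F μ)
    (hsqrtF : Integrable (fun ω => √(F ω)) μ) (hg : Integrable g μ) :
    Integrable (fun ω => √(F ω + g ω ^ 2)) μ := by
  refine (hsqrtF.add hg.abs).mono' ?_ (Filter.Eventually.of_forall fun ω => ?_)
  · exact Real.continuous_sqrt.comp_aestronglyMeasurable (hF.add (hg.aestronglyMeasurable.pow 2))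
  · rw [Real.norm_eq_abs, abs_of_nonneg (Real.sqrt_nonneg _)]
    exact Real.sqrt_add_sq_le _ _

theorem MeasureTheory.integrable_sqrt_sum_sq {ι : Type*} (s : Finset ι) {f : ι → Ω → ℝ}
    (hf : ∀ i ∈ s, Integrable (f i) μ) :
    Integrable (fun ω => √(∑ i ∈ s, f i ω ^ 2)) μ := by
  classical
  induction s using Finset.induction_on with
  | empty => simp
  | insert i s hi ih =>
    simp_rw [sum_insert hi, add_comm (f i _ ^ 2)]
    refine Integrable.sqrt_add_sq ?_ (ih fun j hj => hf j (mem_insert_of_mem hj))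
      (hf i (mem_insert_self i s))
    exact aestronglyMeasurable_fun_sum s fun j hj =>
      (hf j (mem_insert_of_mem hj)).aestronglyMeasurable.pow 2

end Integrability

theorem MeasureTheory.integral_le_two_mul_of_le_add_sum_increments {Ω : Type*}
    [MeasurableSpace Ω] {μ : Measure Ω} {n : ℕ} {V : Ω → ℝ} {S T : ℕ → Ω → ℝ}
    (hV : Integrable V μ) (hS : ∀ k ≤ n, Integrable (S k) μ)
    (hT : ∀ k ∈ Icc 1 n, Integrable (T k) μ) (hS0 : ∫ ω, S 0 ω ∂μ = 0)
    (hVle : ∀ᵐ ω ∂μ, V ω ≤ S n ω + ∑ k ∈ Icc 1 n, (T k ω - S (k - 1) ω))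
    (hTS : ∀ k ∈ Icc 1 n, ∫ ω, T k ω ∂μ ≤ ∫ ω, S k ω ∂μ) :
    ∫ ω, V ω ∂μ ≤ 2 * ∫ ω, S n ω ∂μ := by
  have hS' : ∀ k ∈ Icc 1 n, Integrable (S (k - 1)) μ := fun k hk =>
    hS _ (by simp at hk; omega)
  have hincr : ∀ k ∈ Icc 1 n, Integrable (fun ω => T k ω - S (k - 1) ω) μ := fun k hk =>
    (hT k hk).sub (hS' k hk)
  calc ∫ ω, V ω ∂μ ≤ ∫ ω, (S n ω + ∑ k ∈ Icc 1 n, (T k ω - S (k - 1) ω)) ∂μ :=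
        integral_mono_ae hV ((hS n le_rfl).add (integrable_finsetSum _ hincr)) hVle
    _ = ∫ ω, S n ω ∂μ + ∑ k ∈ Icc 1 n, (∫ ω, T k ω ∂μ - ∫ ω, S (k - 1) ω ∂μ) := by
        rw [integral_add (hS n le_rfl) (integrable_finsetSum _ hincr),
          integral_finsetSum _ hincr]
        exact congrArg _ (sum_congr rfl fun k hk => integral_sub (hT k hk) (hS' k hk))
    _ ≤ ∫ ω, S n ω ∂μ + ∑ k ∈ Icc 1 n, (∫ ω, S k ω ∂μ - ∫ ω, S (k - 1) ω ∂μ) := 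
        add_le_add le_rfl (sum_le_sum fun k hk => sub_le_sub_right (hTS k hk) _)
    _ = 2 * ∫ ω, S n ω ∂μ := by
        rw [sum_Icc_one_sub_pred (fun k => ∫ ω, S k ω ∂μ), hS0]
        ring

theorem stmt_15_general {Ω : Type*} [MeasurableSpace Ω] (μ : Measure Ω)
    (n : ℕ) (u v : ℕ → Ω → ℝ)
    (hu : ∀ k ∈ Finset.Icc 1 n, Integrable (u k) μ)
    (hv : ∀ k ∈ Finset.Icc 1 n, Integrable (v k) μ)
    (hyp : ∀ k ∈ Finset.Icc 1 n,
      (∫ ω, Real.sqrt ((∑ m ∈ Finset.Icc 1 (k - 1), u m ω ^ 2) + v k ω ^ 2) ∂μ)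
        ≤ ∫ ω, Real.sqrt (∑ m ∈ Finset.Icc 1 k, u m ω ^ 2) ∂μ) :
    (∫ ω, Real.sqrt (∑ m ∈ Finset.Icc 1 n, v m ω ^ 2) ∂μ)
      ≤ 2 * ∫ ω, Real.sqrt (∑ m ∈ Finset.Icc 1 n, u m ω ^ 2) ∂μ := by
  have hu' : ∀ k ≤ n, ∀ m ∈ Icc 1 k, Integrable (u m) μ := fun k hk m hm =>
    hu m (Icc_subset_Icc_right hk hm)
  refine integral_le_two_mul_of_le_add_sum_increments (integrable_sqrt_sum_sq _ hv)
    (fun k hk => integrable_sqrt_sum_sq _ (hu' k hk)) (fun k hk => ?_) (by simp)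
    (Filter.Eventually.of_forall fun ω => Real.sqrt_sum_sq_le_add_sum_increments n _ _) hyp
  have hk' : k - 1 ≤ n := (k.sub_le 1).trans (mem_Icc.mp hk).2
  refine Integrable.sqrt_add_sq ?_ (integrable_sqrt_sum_sq _ (hu' (k - 1) hk'))
    (hv k hk)
  exact aestronglyMeasurable_fun_sum _ fun m hm =>
    (hu' (k - 1) hk' m hm).aestronglyMeasurable.pow 2

theorem stmt_15 {Ω : Type*} [MeasurableSpace Ω] (μ : Measure Ω) [IsProbabilityMeasure μ]
    (n : ℕ) (u v : ℕ → Ω → ℝ)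
    (hu : ∀ k ∈ Finset.Icc 1 n, Integrable (u k) μ)
    (hv : ∀ k ∈ Finset.Icc 1 n, Integrable (v k) μ)
    (hu0 : ∀ k ∈ Finset.Icc 1 n, ∀ ω, 0 ≤ u k ω)
    (hv0 : ∀ k ∈ Finset.Icc 1 n, ∀ ω, 0 ≤ v k ω)
    (hyp : ∀ k ∈ Finset.Icc 1 n,
      (∫ ω, Real.sqrt ((∑ m ∈ Finset.Icc 1 (k - 1), u m ω ^ 2) + v k ω ^ 2) ∂μ)
        ≤ ∫ ω, Real.sqrt (∑ m ∈ Finset.Icc 1 k, u m ω ^ 2) ∂μ) :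
    (∫ ω, Real.sqrt (∑ m ∈ Finset.Icc 1 n, v m ω ^ 2) ∂μ)
      ≤ 2 * ∫ ω, Real.sqrt (∑ m ∈ Finset.Icc 1 n, u m ω ^ 2) ∂μ :=
  stmt_15_general μ n u v hu hv hyp
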